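/- arXiv:2301.13464 — 2 statements merged into one kernel-verified Lean document; each statement's English description precedes it below -/
import Mathlib

section
/- Under the construction of the NP-hardness proof, for the precision assignment π and the derived selection α ∈ {0,1}^n defined by α_i = 1 iff π assigns high precision to the three tensors dθ_i, dv_{n+i}, dv_{2n+1}, the computed gradient satisfies: for all i ∈ [n] and j ∈ [w_i], the (i,j) entry of the rounded gradient equals α_i · 2^{−k} x_i. -/
theorem stmt_8 (n k : ℕ) (x : Fin n → ℝ)
    (Rlo Rhi : ℝ → ℝ)
    (hlo1 : Rlo ((2 : ℝ) ^ (-(k : ℤ))) = 0)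
    (hlo2 : ∀ i, Rlo ((2 : ℝ) ^ (-(k : ℤ)) * x i) = 0)
    (hlo3 : Rlo 0 = 0)
    (hhi1 : Rhi ((2 : ℝ) ^ (-(k : ℤ))) = (2 : ℝ) ^ (-(k : ℤ)))
    (hhi2 : ∀ i, Rhi ((2 : ℝ) ^ (-(k : ℤ)) * x i) = (2 : ℝ) ^ (-(k : ℤ)) * x i)
    (hhi3 : Rhi 0 = 0)
    (b1 b2 : Fin n → Bool) (b3 : Bool)
    (R : Bool → ℝ → ℝ) (hR : R true = Rhi ∧ R false = Rlo)
    (g : Fin n → ℝ)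
    (hg : ∀ i, g i = R (b1 i) (R (b2 i) (R b3 ((2 : ℝ) ^ (-(k : ℤ)))) * x i))
    (α : Fin n → ℝ)
    (hα : ∀ i, α i = if b1 i = true ∧ b2 i = true ∧ b3 = true then 1 else 0)
    (w : Fin n → ℕ) :
    ∀ (i : Fin n), ∀ _ : Fin (w i), g i = α i * ((2 : ℝ) ^ (-(k : ℤ)) * x i) := by
  intro i _
  obtain ⟨hT, hF⟩ := hR
  rw [hg, hα]
  cases h3 : b3 <;> cases h1 : b1 i <;> cases h2 : b2 i <;>
    simp only [hT, hF, hlo1, hhi1, zero_mul, hlo2, hhi2, hlo3, hhi3,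
      if_true, if_false, and_true, and_false, false_and, and_self,
      Bool.false_eq_true, if_neg, one_mul]
end

section
/- Suppose an oracle returns, for each instance of the memory-accuracy tradeoff problem constructed from a knapsack instance (w, p, W) as in the proof of Theorem 3.2, an assignment π maximizing acc(π) = 2^{−k} y + 2^{−(2k+l)} Σ α(π)_i w_i x_i² subject to Σ α(π)_i w_i ≤ W, where α(π) ∈ {0,1}^n and |w_i x_i² − p_i| < 1/(2n). Then α(π) is an optimal solution of the knapsack instance: it satisfies Σ α(π)_i w_i ≤ W and Σ α(π)_i p_i ≥ Σ α'_i p_i for every α' ∈ {0,1}^n with Σ α'_i w_i ≤ W. -/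
theorem stmt_12 (n : ℕ) (hn : 1 ≤ n) (w p : Fin n → ℕ)
    (hw : ∀ i, 0 < w i) (hp : ∀ i, 0 < p i)
    (W : ℕ) (k l : ℕ) (y : ℝ)
    (x : Fin n → ℝ)
    (hx : ∀ i, |(w i : ℝ) * x i ^ 2 - p i| < 1 / (2 * n))
    (acc : (Fin n → ℝ) → ℝ)
    (hacc : ∀ α, acc α = (2 : ℝ) ^ (-(k : ℤ)) * y +
      (2 : ℝ) ^ (-(2 * (k : ℤ) + l)) * ∑ i, α i * ((w i : ℝ) * x i ^ 2))
    (αstar : Fin n → ℝ) (hαstar : ∀ i, αstar i = 0 ∨ αstar i = 1)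
    (hfeas : (∑ i, αstar i * w i) ≤ W)
    (hopt : ∀ α' : Fin n → ℝ, (∀ i, α' i = 0 ∨ α' i = 1) →
      (∑ i, α' i * w i) ≤ W → acc α' ≤ acc αstar) :
    (∑ i, αstar i * w i) ≤ W ∧
    ∀ α' : Fin n → ℝ, (∀ i, α' i = 0 ∨ α' i = 1) →
      (∑ i, α' i * w i) ≤ W → (∑ i, α' i * p i) ≤ ∑ i, αstar i * p i := by
  refine ⟨hfeas, ?_⟩
  intro α' hα' hw'
  have hnR : (0:ℝ) < n := by exact_mod_cast hn
  -- error bound for any 0/1 vector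
  have key : ∀ (α : Fin n → ℝ), (∀ i, α i = 0 ∨ α i = 1) →
      |(∑ i, α i * ((w i:ℝ) * x i ^ 2)) - ∑ i, α i * p i| < 1/2 := by
    intro α hα
    rw [← Finset.sum_sub_distrib]
    have h1 : |∑ i, (α i * ((w i:ℝ) * x i ^ 2) - α i * p i)|
        ≤ ∑ i, |α i * ((w i:ℝ) * x i ^ 2) - α i * p i| :=
      Finset.abs_sum_le_sum_abs _ _
    have h2 : ∑ i : Fin n, |α i * ((w i:ℝ) * x i ^ 2) - α i * p i|
        < ∑ i : Fin n, 1/(2*(n:ℝ)) := by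
      apply Finset.sum_lt_sum_of_nonempty
      · exact Finset.univ_nonempty_iff.mpr (Fin.pos_iff_nonempty.mp (by omega))
      · intro i _
        rw [← mul_sub, abs_mul]
        rcases hα i with h | h
        · simp only [h, abs_zero, zero_mul]
          positivity
        · simpa [h] using hx i
    have h3 : ∑ i : Fin n, 1/(2*(n:ℝ)) = 1/2 := by
      rw [Finset.sum_const, Finset.card_univ, Fintype.card_fin, nsmul_eq_mul]
      field_simp
    linarith
  -- integer representation of profits
  have hint : ∀ (α : Fin n → ℝ), (∀ i, α i = 0 ∨ α i = 1) →
      ((∑ i, (if α i = 1 then p i else 0) : ℕ) : ℝ) = ∑ i, α i * p i := by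
    intro α hα
    push_cast
    apply Finset.sum_congr rfl
    intro i _
    rcases hα i with h | h <;> simp [h]
  -- real objective comparison
  have hc : (0:ℝ) < (2 : ℝ) ^ (-(2 * (k : ℤ) + l)) := by positivity
  have hS : (∑ i, α' i * ((w i:ℝ) * x i ^ 2)) ≤ ∑ i, αstar i * ((w i:ℝ) * x i ^ 2) := by
    have := hopt α' hα' hw'
    rw [hacc, hacc] at this
    have := le_of_add_le_add_left this
    exact le_of_mul_le_mul_left this hc
  have k1 := key α' hα'
  have k2 := key αstar hαstar
  rw [abs_lt] at k1 k2
  have hlt : (∑ i, α' i * (p i:ℝ)) < (∑ i, αstar i * (p i:ℝ)) + 1 := by linarith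
  rw [← hint α' hα', ← hint αstar hαstar] at hlt ⊢
  exact_mod_cast Nat.lt_succ_iff.mp (by exact_mod_cast hlt)
end
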